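/- arXiv:cs/0107002 — 8 statements merged into one kernel-verified Lean document; each statement's English description precedes it below -/
import Mathlib

section
/- Stabilization lemma: Let F = {f₁, …, f_k} be a nonempty finite set of reduction functions on D and let d ∈ D. Suppose some iteration of F over d stabilizes at an element e that is a common fixed point of all functions in F. Then e is the greatest common fixed point of the functions from F below d: e ≤ d, f(e) = e for all f ∈ F, and every e' ∈ D with e' ≤ d and f(e') = e' for all f ∈ F satisfies e' ≤ e. -/
/-- Stabilization lemma. -/
theorem stabilization_lemma {D : Type*} [PartialOrder D]
    (F : Set (D → D)) (hfin : F.Finite) (hne : F.Nonempty)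
    (hcontr : ∀ f ∈ F, ∀ x : D, f x ≤ x)
    (hmono : ∀ f ∈ F, Monotone f)
    (d e : D) (seq : ℕ → D)
    (hseq0 : seq 0 = d)
    (hseqstep : ∀ i : ℕ, ∃ f ∈ F, seq (i + 1) = f (seq i))
    (hstab : ∃ j : ℕ, ∀ i ≥ j, seq i = e)
    (hfix : ∀ f ∈ F, f e = e) :
    e ≤ d ∧ (∀ f ∈ F, f e = e) ∧
      ∀ e' : D, e' ≤ d → (∀ f ∈ F, f e' = e') → e' ≤ e := by
  obtain ⟨j, hj⟩ := hstab
  have hanti : ∀ i, seq i ≤ seq 0 := by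
    intro i
    induction i with
    | zero => exact le_refl _
    | succ n ih =>
      obtain ⟨f, hf, hstep⟩ := hseqstep n
      exact le_trans (hstep ▸ hcontr f hf (seq n)) ih
  refine ⟨?_, hfix, ?_⟩
  · have := hanti j
    rw [hj j le_rfl, hseq0] at this
    exact this
  · intro e' he'd hfix'
    have h : ∀ i, e' ≤ seq i := by
      intro i
      induction i with
      | zero => rw [hseq0]; exact he'd
      | succ n ih =>
        obtain ⟨f, hf, hstep⟩ := hseqstep n
        rw [hstep, ← hfix' f hf]
        exact hmono f hf ih
    have := h j
    rwa [hj j le_rfl] at this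
end

section
/- Let F be a nonempty finite set of reduction functions on D, and let Φ = {φ₁, …, φ_m} be a nonempty finite set of reduction functions on D such that: (a) to each φ_i is associated a set Gen(φ_i) ⊆ F with the property that e ∈ D is a fixed point of φ_i if and only if e is a common fixed point of all functions in Gen(φ_i); and (b) the union of the sets Gen(φ_i) over i is all of F. If some iteration of Φ over d ∈ D stabilizes at an element e that is a common fixed point of all φ_i ∈ Φ, then e is the greatest common fixed point of the functions from F below d: e ≤ d, f(e) = e for all f ∈ F, and every e' ∈ D with e' ≤ d and f(e') = e' for all f ∈ F satisfies e' ≤ e. -/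
/-- stabilization lemma for composition operators.  `F` is a
nonempty finite set of reduction functions; `φ₁, …, φ_m` are reduction
functions each equipped with a generator `Gen i ⊆ F` such that the fixed
points of `φ i` are exactly the common fixed points of `Gen i`, and the
generators cover `F`.  If an iteration of the `φ i` over `d` stabilizes at a
common fixed point `e` of the `φ i`, then `e` is the greatest common fixed
point of the functions from `F` below `d`. -/
theorem stabilization_composition_operators {D : Type*} [PartialOrder D]
    (F : Set (D → D)) (hFfin : F.Finite) (hFne : F.Nonempty)
    (hFcontr : ∀ f ∈ F, ∀ x : D, f x ≤ x)
    (hFmono : ∀ f ∈ F, Monotone f)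
    {m : ℕ} (hm : 0 < m) (φ : Fin m → D → D)
    (hφcontr : ∀ i, ∀ x : D, φ i x ≤ x)
    (hφmono : ∀ i, Monotone (φ i))
    (Gen : Fin m → Set (D → D))
    (hGenSub : ∀ i, Gen i ⊆ F)
    (hGenFix : ∀ i, ∀ e : D, φ i e = e ↔ ∀ f ∈ Gen i, f e = e)
    (hCover : (⋃ i, Gen i) = F)
    (d e : D) (seq : ℕ → D)
    (hseq0 : seq 0 = d)
    (hseqstep : ∀ n : ℕ, ∃ i, seq (n + 1) = φ i (seq n))
    (hstab : ∃ j : ℕ, ∀ i ≥ j, seq i = e)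
    (hfix : ∀ i, φ i e = e) :
    e ≤ d ∧ (∀ f ∈ F, f e = e) ∧
      ∀ e' : D, e' ≤ d → (∀ f ∈ F, f e' = e') → e' ≤ e := by
  obtain ⟨j, hj⟩ := hstab
  have hdec : ∀ n, seq n ≤ d := by
    intro n
    induction n with
    | zero => simp [hseq0]
    | succ n ih =>
      obtain ⟨i, hi⟩ := hseqstep n
      exact hi ▸ (hφcontr i (seq n)).trans ih
  refine ⟨(hj j le_rfl) ▸ hdec j, ?_, ?_⟩
  · intro f hf
    rw [← hCover] at hf
    obtain ⟨_, ⟨i, rfl⟩, hfi⟩ := hf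
    exact (hGenFix i e).mp (hfix i) f hfi
  · intro e' he'd he'fix
    have hφfix : ∀ i, φ i e' = e' := fun i =>
      (hGenFix i e').mpr fun f hf => he'fix f (hGenSub i hf)
    have : ∀ n, e' ≤ seq n := by
      intro n
      induction n with
      | zero => simpa [hseq0]
      | succ n ih =>
        obtain ⟨i, hi⟩ := hseqstep n
        rw [hi, ← hφfix i]
        exact hφmono i ih
    exact (hj j le_rfl) ▸ this j
end

section
/- Let φ₁, …, φ_k (k ≥ 1) be reduction functions on D such that each φ_i is idempotent (φ_i ∘ φ_i = φ_i) and, for all i > j, φ_i semi-commutes with φ_j, i.e., φ_j(φ_i(x)) ≤ φ_i(φ_j(x)) for all x ∈ D. Then the sequence composition x ↦ φ₁(φ₂(⋯φ_k(x)⋯)) is idempotent. -/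
/-- Sequence composition `x ↦ f₁(f₂(⋯f_k(x)⋯))` of a family of functions. -/
def seqComp {D : Type*} {k : ℕ} (f : Fin k → D → D) : D → D :=
  (List.ofFn f).foldr (· ∘ ·) id

/-!
Each `φ_i` fixes `y = φ₁(φ₂(⋯φ_k(x)⋯))`, so the composition fixes `y`. Indeed `φ_i` fixes
`z = φ_i(⋯φ_k(x)⋯)` by idempotence, and applying each `φ_j`, `j < i`, preserves this: if
`φ_i z = z`, then `φ_j z = φ_j (φ_i z) ≤ φ_i (φ_j z) ≤ φ_j z` by semi-commutation and contraction.
-/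

open Function

def SemiCommute {D : Type*} [LE D] (f g : D → D) : Prop :=
  ∀ x, g (f x) ≤ f (g x)

theorem SemiCommute.isFixedPt_apply {D : Type*} [PartialOrder D] {f g : D → D}
    (hfg : SemiCommute f g) (hf : ∀ x, f x ≤ x) {z : D} (hz : IsFixedPt f z) :
    IsFixedPt f (g z) :=
  le_antisymm (hf (g z)) <|
    calc g z = g (f z) := by rw [hz.eq]
      _ ≤ f (g z) := hfg z

theorem isFixedPt_foldr_comp {α : Type*} {l : List (α → α)} {y : α}
    (h : ∀ f ∈ l, IsFixedPt f y) : IsFixedPt (l.foldr (· ∘ ·) id) y := by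
  induction l with
  | nil => exact isFixedPt_id y
  | cons f t ih =>
    exact (h f List.mem_cons_self).comp (ih fun g hg => h g (List.mem_cons_of_mem f hg))

theorem isFixedPt_foldr_comp_apply {D : Type*} [PartialOrder D] {l : List (D → D)}
    (hcontr : ∀ f ∈ l, ∀ x, f x ≤ x) (hidem : ∀ f ∈ l, f ∘ f = f)
    (hsemi : l.Pairwise fun f g => SemiCommute g f) (x : D) :
    ∀ g ∈ l, IsFixedPt g (l.foldr (· ∘ ·) id x) := by
  induction l with
  | nil => simp
  | cons f t ih =>
    obtain ⟨hsemi_f, hsemi_t⟩ := List.pairwise_cons.mp hsemi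
    intro g hg
    rcases List.mem_cons.mp hg with rfl | hg
    · exact congrFun (hidem g List.mem_cons_self) _
    · have hfix := ih (fun f hf => hcontr f (List.mem_cons_of_mem _ hf))
        (fun f hf => hidem f (List.mem_cons_of_mem _ hf)) hsemi_t g hg
      exact (hsemi_f g hg).isFixedPt_apply (hcontr g (List.mem_cons_of_mem _ hg)) hfix

theorem seqComp_idempotent_of_semiCommute_general {D : Type*} [PartialOrder D]
    {k : ℕ} (φ : Fin k → D → D)
    (hcontr : ∀ i, ∀ x : D, φ i x ≤ x)
    (hidem : ∀ i, φ i ∘ φ i = φ i)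
    (hsemi : ∀ i j : Fin k, j < i → ∀ x : D, φ j (φ i x) ≤ φ i (φ j x)) :
    ∀ x : D, seqComp φ (seqComp φ x) = seqComp φ x := by
  intro x
  have hfix : ∀ f ∈ List.ofFn φ, IsFixedPt f (seqComp φ x) := by
    refine isFixedPt_foldr_comp_apply ?_ ?_ ?_ x
    · exact List.forall_mem_ofFn_iff.mpr hcontr
    · exact List.forall_mem_ofFn_iff.mpr hidem
    · exact List.pairwise_ofFn.mpr fun i j hij => hsemi j i hij
  exact isFixedPt_foldr_comp hfix

/-- if the reduction functions `φ₁, …, φ_k` are idempotent and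
`φ_i` semi-commutes with `φ_j` for `i > j` (i.e., `φ_j (φ_i x) ≤ φ_i (φ_j x)`),
then their sequence composition is idempotent. -/
theorem seqComp_idempotent_of_semiCommute {D : Type*} [PartialOrder D]
    {k : ℕ} (hk : 0 < k) (φ : Fin k → D → D)
    (hcontr : ∀ i, ∀ x : D, φ i x ≤ x)
    (hmono : ∀ i, Monotone (φ i))
    (hidem : ∀ i, φ i ∘ φ i = φ i)
    (hsemi : ∀ i j : Fin k, j < i → ∀ x : D, φ j (φ i x) ≤ φ i (φ j x)) :
    ∀ x : D, seqComp φ (seqComp φ x) = seqComp φ x :=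
  seqComp_idempotent_of_semiCommute_general φ hcontr hidem hsemi
end

section
/- Let φ₁, …, φ_k (k ≥ 1) be reduction functions on D such that φ₁ is idempotent (φ₁ ∘ φ₁ = φ₁) and for each i ∈ {2, …, k} there exists j < i such that φ_j is stronger than φ_i (φ_j(x) ≤ φ_i(x) for all x). Then the sequence composition x ↦ φ₁(φ₂(⋯φ_k(x)⋯)) is idempotent. -/
/-!
Let `y = φ₁(φ₂(⋯φ_k(x)⋯))`. Since `φ₁` is idempotent and `y` lies in its range, `φ₁ y = y`.
By strong induction on `i`, every `φ_i` fixes `y`: if `φ_j` is stronger than `φ_i` and fixes `y`,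
then `y = φ_j y ≤ φ_i y ≤ y`. A point fixed by every `φ_i` is fixed by their composition.
-/

theorem seqComp_succ {D : Type*} {n : ℕ} (f : Fin (n + 1) → D → D) :
    seqComp f = f 0 ∘ seqComp (fun i : Fin n => f i.succ) := by
  rw [seqComp, List.ofFn_succ]
  rfl

theorem seqComp_apply_eq_self {D : Type*} {k : ℕ} {f : Fin k → D → D} {y : D}
    (h : ∀ i, f i y = y) : seqComp f y = y := by
  induction k with
  | zero => rfl
  | succ n ih => rw [seqComp_succ, Function.comp_apply, ih fun i => h i.succ, h 0]

theorem apply_eq_self_of_stronger {D : Type*} [PartialOrder D] {k : ℕ} (hk : 0 < k)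
    {φ : Fin k → D → D} (hcontr : ∀ i, ∀ x : D, φ i x ≤ x)
    (hstr : ∀ i : Fin k, 0 < i.val → ∃ j : Fin k, j < i ∧ ∀ x : D, φ j x ≤ φ i x)
    {y : D} (hy : φ ⟨0, hk⟩ y = y) (i : Fin k) : φ i y = y := by
  induction i using WellFoundedLT.induction with
  | _ i ih =>
    rcases Nat.eq_zero_or_pos i.val with hi | hi
    · rwa [show i = ⟨0, hk⟩ from Fin.ext hi]
    · obtain ⟨j, hji, hj⟩ := hstr i hi
      refine le_antisymm (hcontr i y) ?_
      calc y = φ j y := (ih j hji).symm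
        _ ≤ φ i y := hj y

theorem seqComp_idempotent_of_stronger_general {D : Type*} [PartialOrder D]
    {k : ℕ} (hk : 0 < k) (φ : Fin k → D → D)
    (hcontr : ∀ i, ∀ x : D, φ i x ≤ x)
    (hidem : φ ⟨0, hk⟩ ∘ φ ⟨0, hk⟩ = φ ⟨0, hk⟩)
    (hstr : ∀ i : Fin k, 0 < i.val → ∃ j : Fin k, j < i ∧ ∀ x : D, φ j x ≤ φ i x) :
    ∀ x : D, seqComp φ (seqComp φ x) = seqComp φ x := by
  intro x
  obtain ⟨n, rfl⟩ := Nat.exists_eq_succ_of_ne_zero hk.ne'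
  have hfirst : φ ⟨0, hk⟩ (seqComp φ x) = seqComp φ x := by
    rw [seqComp_succ]
    exact congrFun hidem _
  exact seqComp_apply_eq_self (apply_eq_self_of_stronger hk hcontr hstr hfirst)

/-- if `φ₁` is idempotent and, for each `i ≥ 2`, some earlier
`φ_j` (`j < i`) is stronger than `φ_i`, then the sequence composition of the
reduction functions `φ₁, …, φ_k` is idempotent.  (`φ₁` is index `0`.) -/
theorem seqComp_idempotent_of_stronger {D : Type*} [PartialOrder D]
    {k : ℕ} (hk : 0 < k) (φ : Fin k → D → D)
    (hcontr : ∀ i, ∀ x : D, φ i x ≤ x)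
    (hmono : ∀ i, Monotone (φ i))
    (hidem : φ ⟨0, hk⟩ ∘ φ ⟨0, hk⟩ = φ ⟨0, hk⟩)
    (hstr : ∀ i : Fin k, 0 < i.val → ∃ j : Fin k, j < i ∧ ∀ x : D, φ j x ≤ φ i x) :
    ∀ x : D, seqComp φ (seqComp φ x) = seqComp φ x :=
  seqComp_idempotent_of_stronger_general hk φ hcontr hidem hstr
end

section
/- Let φ₁, …, φ_k (k ≥ 1) be reduction functions on a meet-semilattice D such that each φ_i is idempotent (φ_i ∘ φ_i = φ_i) and the φ_i are pairwise independent (for i ≠ j, φ_i(φ_j(x)) = φ_j(φ_i(x)) = φ_i(x) ⊓ φ_j(x) for all x). Then the decoupling map x ↦ φ₁(x) ⊓ φ₂(x) ⊓ ⋯ ⊓ φ_k(x) is idempotent. -/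
/-!
Independence makes the `φ i` commute and turns a composite `φ j ∘ φ m` into the meet
`φ j x ⊓ φ m x`; by induction, composing all the `φ i` computes the decoupling map. A composite
that contains `φ i` is fixed by `φ i`, because `φ i` commutes past the other factors and is
idempotent. So every `φ i` fixes `decouple hk φ x`, and hence so does the decoupling map.
-/

/-- Decoupling map `x ↦ f₁(x) ⊓ f₂(x) ⊓ ⋯ ⊓ f_k(x)` of a nonempty family of functions. -/
def decouple {D : Type*} [SemilatticeInf D] {k : ℕ} (hk : 0 < k)
    (f : Fin k → D → D) (x : D) : D :=
  Finset.univ.inf' (Finset.univ_nonempty_iff.mpr (Fin.pos_iff_nonempty.mp hk))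
    (fun i => f i x)

namespace List

variable {ι α : Type*} {φ : ι → α → α}

theorem foldr_le_init [Preorder α] (hcontr : ∀ i x, φ i x ≤ x) (l : List ι) (x : α) :
    l.foldr φ x ≤ x := by
  induction l with
  | nil => exact le_rfl
  | cons j l ih => exact (hcontr j _).trans ih

theorem foldr_le_apply_of_mem [Preorder α] (hcontr : ∀ i x, φ i x ≤ x)
    (hmono : ∀ i, Monotone (φ i)) {l : List ι} {i : ι} (hi : i ∈ l) (x : α) :
    l.foldr φ x ≤ φ i x := by
  induction l with
  | nil => simp at hi
  | cons j l ih =>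
    rcases mem_cons.mp hi with rfl | hi
    · exact hmono i (foldr_le_init hcontr l x)
    · exact (hcontr j _).trans (ih hi)

theorem apply_foldr_of_not_mem {i : ι} (hcomm : ∀ j, j ≠ i → ∀ x, φ i (φ j x) = φ j (φ i x))
    {l : List ι} (hi : i ∉ l) (x : α) : φ i (l.foldr φ x) = l.foldr φ (φ i x) := by
  induction l with
  | nil => rfl
  | cons j l ih =>
    rw [foldr_cons, foldr_cons, hcomm j (ne_of_not_mem_cons hi).symm, ih (not_mem_of_not_mem_cons hi)]

theorem apply_foldr_of_mem {i : ι} (hidem : φ i ∘ φ i = φ i)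
    (hcomm : ∀ j, j ≠ i → ∀ x, φ i (φ j x) = φ j (φ i x))
    {l : List ι} (hi : i ∈ l) (x : α) : φ i (l.foldr φ x) = l.foldr φ x := by
  induction l with
  | nil => simp at hi
  | cons j l ih =>
    rw [foldr_cons]
    by_cases hij : j = i
    · subst hij
      exact congrFun hidem _
    · rw [hcomm j hij, ih ((mem_cons.mp hi).resolve_left (Ne.symm hij))]

theorem le_foldr_of_forall_le [SemilatticeInf α]
    (hmeet : _root_.Pairwise fun i j => ∀ x, φ i (φ j x) = φ i x ⊓ φ j x)
    {l : List ι} (hl : l.Nodup) (hne : l ≠ []) {x y : α} (hy : ∀ j ∈ l, y ≤ φ j x) :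
    y ≤ l.foldr φ x := by
  induction l generalizing x with
  | nil => exact absurd rfl hne
  | cons j l ih =>
    obtain ⟨hj, hl⟩ := nodup_cons.mp hl
    rcases eq_or_ne l [] with rfl | hne
    · exact hy j mem_cons_self
    have hcomm : ∀ m, m ≠ j → ∀ x, φ j (φ m x) = φ m (φ j x) := fun m hmj x => by
      rw [hmeet hmj.symm, hmeet hmj, inf_comm]
    rw [foldr_cons, apply_foldr_of_not_mem hcomm hj]
    refine ih hl hne fun m hm => ?_
    rw [hmeet (ne_of_mem_of_not_mem hm hj)]
    exact le_inf (hy m (mem_cons_of_mem _ hm)) (hy j mem_cons_self)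

end List

theorem decouple_eq_foldr {D : Type*} [SemilatticeInf D] {k : ℕ} (hk : 0 < k)
    {φ : Fin k → D → D} (hcontr : ∀ i x, φ i x ≤ x) (hmono : ∀ i, Monotone (φ i))
    (hmeet : Pairwise fun i j => ∀ x, φ i (φ j x) = φ i x ⊓ φ j x)
    {l : List (Fin k)} (hl : l.Nodup) (hmem : ∀ i, i ∈ l) (x : D) :
    decouple hk φ x = l.foldr φ x := by
  have hne : l ≠ [] := List.ne_nil_of_mem (hmem ⟨0, hk⟩)
  refine le_antisymm ?_ ?_
  · exact List.le_foldr_of_forall_le hmeet hl hne fun j _ =>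
      Finset.inf'_le _ (Finset.mem_univ j)
  · exact Finset.le_inf' _ _ fun i _ => List.foldr_le_apply_of_mem hcontr hmono (hmem i) x

/-- if the reduction functions `φ₁, …, φ_k` on a
meet-semilattice are idempotent and pairwise independent
(`φ_i (φ_j x) = φ_j (φ_i x) = φ_i x ⊓ φ_j x` for `i ≠ j`),
then their decoupling map is idempotent. -/
theorem decouple_idempotent_of_independent {D : Type*} [SemilatticeInf D]
    {k : ℕ} (hk : 0 < k) (φ : Fin k → D → D)
    (hcontr : ∀ i, ∀ x : D, φ i x ≤ x)
    (hmono : ∀ i, Monotone (φ i))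
    (hidem : ∀ i, φ i ∘ φ i = φ i)
    (hindep : ∀ i j : Fin k, i ≠ j → ∀ x : D,
      φ i (φ j x) = φ j (φ i x) ∧ φ j (φ i x) = φ i x ⊓ φ j x) :
    ∀ x : D, decouple hk φ (decouple hk φ x) = decouple hk φ x := by
  intro x
  have hmeet : Pairwise fun i j => ∀ x, φ i (φ j x) = φ i x ⊓ φ j x :=
    fun i j hij x => (hindep i j hij x).1.trans (hindep i j hij x).2
  have hL := decouple_eq_foldr hk hcontr hmono hmeet (Finset.nodup_toList Finset.univ)
    (fun i => Finset.mem_toList.mpr (Finset.mem_univ i)) x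
  have hfix : ∀ i, φ i (decouple hk φ x) = decouple hk φ x := fun i => by
    rw [hL]
    exact List.apply_foldr_of_mem (hidem i) (fun j hji y => (hindep i j hji.symm y).1) (by simp) x
  conv_lhs => rw [decouple]; simp only [hfix]
  exact Finset.inf'_const _ _
end

section
/- Let D be a finite meet-semilattice, Φ a nonempty finite set of reduction functions on D, and φ a reduction function on D such that φ and ψ are independent for every ψ ∈ Φ. Then for every x ∈ D, Gfp(Φ ∪ {φ})(x) = Gfp(Φ)(x) ⊓ φ↑ω(x). -/
/-- `G` is the `Gfp` operator of a set `F` of functions: for each `x`,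
`G x` is the greatest element of `{e : e ≤ x ∧ ∀ f ∈ F, f e = e}`. -/
def IsGfp {D : Type*} [PartialOrder D] (F : Set (D → D)) (G : D → D) : Prop :=
  ∀ x : D, G x ≤ x ∧ (∀ f ∈ F, f (G x) = G x) ∧
    ∀ e : D, e ≤ x → (∀ f ∈ F, f e = e) → e ≤ G x

section Aux

variable {D : Type*} [SemilatticeInf D]

/-- Apply a list of functions in order. -/
private def applyL (l : List (D → D)) (z : D) : D := l.foldr (fun f y => f y) z

@[simp] private lemma applyL_nil (z : D) : applyL ([] : List (D → D)) z = z := rfl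

@[simp] private lemma applyL_cons (f : D → D) (l : List (D → D)) (z : D) :
    applyL (f :: l) z = f (applyL l z) := rfl

private lemma applyL_le (l : List (D → D)) (hc : ∀ f ∈ l, ∀ y : D, f y ≤ y) (z : D) :
    applyL l z ≤ z := by
  induction l with
  | nil => simp
  | cons f l ih =>
    simp only [applyL_cons]
    exact le_trans (hc f (by simp) _) (ih (fun f hf y => hc f (by simp [hf]) y))

private lemma applyL_mono (l : List (D → D)) (hm : ∀ f ∈ l, Monotone f) :
    Monotone (applyL l) := by
  induction l with
  | nil => exact fun a b h => by simpa using h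
  | cons f l ih =>
    intro a b h
    simp only [applyL_cons]
    exact hm f (by simp) (ih (fun f hf => hm f (by simp [hf])) h)

private lemma applyL_fix (l : List (D → D)) {z : D} (h : ∀ f ∈ l, f z = z) :
    applyL l z = z := by
  induction l with
  | nil => simp
  | cons f l ih =>
    simp only [applyL_cons]
    rw [ih (fun g hg => h g (by simp [hg]))]
    exact h f (by simp)

private lemma applyL_fix_of_fix : ∀ (l : List (D → D)),
    (∀ f ∈ l, ∀ y : D, f y ≤ y) →
    ∀ {z : D}, applyL l z = z → ∀ f ∈ l, f z = z := by
  intro l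
  induction l with
  | nil => simp
  | cons f l ih =>
    intro hm z hz g hg
    have hle : applyL l z ≤ z := applyL_le l (fun g hg y => hm g (by simp [hg]) y) z
    have hfz : f (applyL l z) = z := hz
    have h1 : z ≤ applyL l z := by
      calc z = f (applyL l z) := hfz.symm
        _ ≤ applyL l z := hm f (by simp) _
    have heq : applyL l z = z := le_antisymm hle h1
    rcases List.mem_cons.mp hg with h | h
    · subst h
      calc g z = g (applyL l z) := by rw [heq]
        _ = z := hfz
    · exact ih (fun g hg y => hm g (by simp [hg]) y) heq g h

private lemma iterate_le (F : D → D) (hc : ∀ y : D, F y ≤ y) :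
    ∀ (n : ℕ) (z : D), F^[n] z ≤ z := by
  intro n
  induction n with
  | zero => simp
  | succ n ih =>
    intro z
    rw [Function.iterate_succ_apply']
    exact le_trans (hc _) (ih z)

private lemma exists_iterate_fixed [Finite D] (F : D → D) (hc : ∀ y : D, F y ≤ y) (x : D) :
    ∃ N : ℕ, F (F^[N] x) = F^[N] x := by
  have : ¬ Function.Injective (fun n : ℕ => F^[n] x) := by
    intro hinj
    exact (Finite.false (Finite.of_injective _ hinj))
  rw [Function.not_injective_iff] at this
  obtain ⟨m, n, heq, hne⟩ := this
  rcases lt_or_gt_of_ne hne with h | h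
  · refine ⟨m, le_antisymm (hc _) ?_⟩
    have h1 : F^[n] x ≤ F (F^[m] x) := by
      have : F^[n] x = F^[n - m - 1] (F (F^[m] x)) := by
        rw [← Function.iterate_succ_apply, ← Function.iterate_add_apply]
        congr 1
        omega
      rw [this]
      exact iterate_le F hc _ _
    calc F^[m] x = F^[n] x := heq
      _ ≤ F (F^[m] x) := h1
  · refine ⟨n, le_antisymm (hc _) ?_⟩
    have h1 : F^[m] x ≤ F (F^[n] x) := by
      have : F^[m] x = F^[m - n - 1] (F (F^[n] x)) := by
        rw [← Function.iterate_succ_apply, ← Function.iterate_add_apply]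
        congr 1
        omega
      rw [this]
      exact iterate_le F hc _ _
    calc F^[n] x = F^[m] x := heq.symm
      _ ≤ F (F^[n] x) := h1

end Aux

/-- on a finite meet-semilattice, if the reduction function `φ`
is independent of every member of the nonempty finite set `Φ` of reduction
functions, then `Gfp (Φ ∪ {φ}) x = Gfp Φ x ⊓ φ↑ω x`.  Here `L` is the closure
map of `φ` (the eventual value of its iterates). -/
theorem gfp_insert_of_independent {D : Type*} [SemilatticeInf D] [Finite D]
    (Φ : Set (D → D)) (hfin : Φ.Finite) (hne : Φ.Nonempty)
    (hΦcontr : ∀ ψ ∈ Φ, ∀ x : D, ψ x ≤ x)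
    (hΦmono : ∀ ψ ∈ Φ, Monotone ψ)
    (φ : D → D) (hφcontr : ∀ x : D, φ x ≤ x) (hφmono : Monotone φ)
    (hindep : ∀ ψ ∈ Φ, ∀ x : D,
      φ (ψ x) = ψ (φ x) ∧ ψ (φ x) = φ x ⊓ ψ x)
    (L : D → D) (hL : ∀ d : D, ∃ N : ℕ, ∀ n : ℕ, N ≤ n → φ^[n] d = L d)
    (GΦ : D → D) (hGΦ : IsGfp Φ GΦ)
    (GΦφ : D → D) (hGΦφ : IsGfp (Φ ∪ {φ}) GΦφ) :
    ∀ x : D, GΦφ x = GΦ x ⊓ L x := by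
  -- Key pointwise facts from independence
  have keyA : ∀ ψ ∈ Φ, ∀ (n : ℕ) (z : D), φ^[n] (ψ z) = φ^[n] z ⊓ ψ z := by
    intro ψ hψ n
    induction n with
    | zero =>
      intro z
      simp [inf_eq_right.mpr (hΦcontr ψ hψ z)]
    | succ n ih =>
      intro z
      rw [Function.iterate_succ_apply, Function.iterate_succ_apply,
        (hindep ψ hψ z).1, ih (φ z), (hindep ψ hψ z).2, ← inf_assoc]
      congr 1
      exact inf_eq_left.mpr (iterate_le φ hφcontr n (φ z))
  have keyB : ∀ ψ ∈ Φ, ∀ z : D, ψ z = z → ∀ n : ℕ, ψ (φ^[n] z) = φ^[n] z := by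
    intro ψ hψ z hz n
    induction n with
    | zero => simpa using hz
    | succ n ih =>
      rw [Function.iterate_succ_apply', (hindep ψ hψ (φ^[n] z)).2, ih]
      exact inf_eq_left.mpr (hφcontr _)
  -- the word computing GΦ
  set l : List (D → D) := hfin.toFinset.toList with hl
  have hmem : ∀ ψ, ψ ∈ l ↔ ψ ∈ Φ := by
    intro ψ
    simp [hl, Set.Finite.mem_toFinset]
  have hlcontr : ∀ f ∈ l, ∀ y : D, f y ≤ y := fun f hf => hΦcontr f ((hmem f).mp hf)
  have hlmono : ∀ f ∈ l, Monotone f := fun f hf => hΦmono f ((hmem f).mp hf)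
  set F : D → D := applyL l with hF
  have hFcontr : ∀ y : D, F y ≤ y := applyL_le l hlcontr
  have hFmono : Monotone F := applyL_mono l hlmono
  intro x
  obtain ⟨N, hN⟩ := exists_iterate_fixed F hFcontr x
  set b : D := F^[N] x with hb
  have hbfix : ∀ ψ ∈ Φ, ψ b = b := by
    intro ψ hψ
    exact applyL_fix_of_fix l hlcontr hN ψ ((hmem ψ).mpr hψ)
  have hble : b ≤ x := iterate_le F hFcontr N x
  -- GΦ x = b
  have hGx := hGΦ x
  have hab : GΦ x = b := by
    have h1 : b ≤ GΦ x := hGx.2.2 b hble hbfix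
    have hFa : F (GΦ x) = GΦ x := applyL_fix l (fun f hf => hGx.2.1 f ((hmem f).mp hf))
    have h2 : GΦ x ≤ b := by
      calc GΦ x = F^[N] (GΦ x) := (Function.iterate_fixed hFa N).symm
        _ ≤ F^[N] x := hFmono.iterate N hGx.1
    exact le_antisymm h2 h1
  -- iterates of φ on words: φ^[n] (F^[k] x) = φ^[n] x ⊓ F^[k] x
  have keyD : ∀ (n : ℕ) (lw : List (D → D)), (∀ f ∈ lw, f ∈ Φ) → ∀ z : D,
      φ^[n] (applyL lw z) = φ^[n] z ⊓ applyL lw z := by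
    intro n lw
    induction lw with
    | nil =>
      intro _ z
      simp [inf_eq_left.mpr (iterate_le φ hφcontr n z)]
    | cons f lw ih =>
      intro hmem' z
      simp only [applyL_cons]
      rw [keyA f (hmem' f (by simp)) n, ih (fun g hg => hmem' g (by simp [hg])), inf_assoc]
      congr 1
      exact inf_eq_right.mpr
        (hΦcontr f (hmem' f (by simp)) (applyL lw z))
  have keyE : ∀ (n k : ℕ), φ^[n] (F^[k] x) = φ^[n] x ⊓ F^[k] x := by
    intro n k
    induction k with
    | zero => simp [inf_eq_left.mpr (iterate_le φ hφcontr n x)]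
    | succ k ih =>
      rw [Function.iterate_succ_apply']
      have hstep : φ^[n] (F (F^[k] x)) = φ^[n] (F^[k] x) ⊓ F (F^[k] x) :=
        keyD n l (fun f hf => (hmem f).mp hf) (F^[k] x)
      rw [hstep, ih, inf_assoc]
      congr 1
      exact inf_eq_right.mpr (hFcontr _)
  -- choose a large enough iterate index
  obtain ⟨N1, hN1⟩ := hL x
  obtain ⟨N2, hN2⟩ := hL b
  set n := max N1 N2 with hn
  have hLb : L b = L x ⊓ b := by
    rw [← hN2 n (le_max_right _ _), ← hN1 n (le_max_left _ _), hb, keyE]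
  -- L b is a common fixpoint ≤ x
  have hLble : L b ≤ x := by
    rw [← hN2 n (le_max_right _ _)]
    exact le_trans (iterate_le φ hφcontr n b) hble
  have hLbfixφ : φ (L b) = L b := by
    calc φ (L b) = φ (φ^[n] b) := by rw [hN2 n (le_max_right _ _)]
      _ = φ^[n + 1] b := (Function.iterate_succ_apply' φ n b).symm
      _ = L b := hN2 (n + 1) (by omega)
  have hLbfixΦ : ∀ ψ ∈ Φ, ψ (L b) = L b := by
    intro ψ hψ
    rw [← hN2 n (le_max_right _ _)]
    exact keyB ψ hψ b (hbfix ψ hψ) n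
  -- conclude
  have hGxφ := hGΦφ x
  have h1 : L b ≤ GΦφ x := by
    refine hGxφ.2.2 (L b) hLble ?_
    intro f hf
    rcases hf with hf | hf
    · exact hLbfixΦ f hf
    · rw [Set.mem_singleton_iff] at hf; subst hf; exact hLbfixφ
  have h2 : GΦφ x ≤ L b := by
    have hgle : GΦφ x ≤ b := by
      rw [← hab]
      exact hGx.2.2 _ hGxφ.1 (fun f hf => hGxφ.2.1 f (Set.mem_union_left _ hf))
    have hφfix : φ (GΦφ x) = GΦφ x :=
      hGxφ.2.1 φ (Set.mem_union_right _ rfl)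
    calc GΦφ x = φ^[n] (GΦφ x) := (Function.iterate_fixed hφfix n).symm
      _ ≤ φ^[n] b := hφmono.iterate n hgle
      _ = L b := hN2 n (le_max_right _ _)
  have hfinal : GΦφ x = L b := le_antisymm h2 h1
  rw [hfinal, hLb, hab, inf_comm]
end

section
/- Let D be a finite meet-semilattice, Φ a nonempty finite set of reduction functions on D, and φ a reduction function on D such that φ is weakly redundant with some ψ ∈ Φ, i.e., φ↑ω(x) = ψ↑ω(x) for all x ∈ D. Then for every x ∈ D, Gfp(Φ ∪ {φ})(x) = Gfp(Φ)(x). -/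
/-- on a finite meet-semilattice, if the reduction function `φ`
is weakly redundant with some `ψ ∈ Φ` (their closure maps `Lφ = φ↑ω` and
`Lψ = ψ↑ω` coincide), then `Gfp (Φ ∪ {φ}) x = Gfp Φ x`. -/
theorem gfp_insert_of_weakly_redundant {D : Type*} [SemilatticeInf D] [Finite D]
    (Φ : Set (D → D)) (hfin : Φ.Finite) (hne : Φ.Nonempty)
    (hΦcontr : ∀ χ ∈ Φ, ∀ x : D, χ x ≤ x)
    (hΦmono : ∀ χ ∈ Φ, Monotone χ)
    (φ : D → D) (hφcontr : ∀ x : D, φ x ≤ x) (hφmono : Monotone φ)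
    (ψ : D → D) (hψΦ : ψ ∈ Φ)
    (Lφ : D → D) (hLφ : ∀ d : D, ∃ N : ℕ, ∀ n : ℕ, N ≤ n → φ^[n] d = Lφ d)
    (Lψ : D → D) (hLψ : ∀ d : D, ∃ N : ℕ, ∀ n : ℕ, N ≤ n → ψ^[n] d = Lψ d)
    (hweak : ∀ x : D, Lφ x = Lψ x)
    (GΦ : D → D) (hGΦ : IsGfp Φ GΦ)
    (GΦφ : D → D) (hGΦφ : IsGfp (Φ ∪ {φ}) GΦφ) :
    ∀ x : D, GΦφ x = GΦ x := by
  intro x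
  obtain ⟨h1, h2, h3⟩ := hGΦφ x
  obtain ⟨g1, g2, g3⟩ := hGΦ x
  -- ψ fixes GΦ x, so ψ^[n] (GΦ x) = GΦ x, hence Lψ (GΦ x) = GΦ x
  have hψfix : ∀ n : ℕ, ψ^[n] (GΦ x) = GΦ x := by
    intro n
    induction n with
    | zero => simp
    | succ n ih => rw [Function.iterate_succ_apply', ih, g2 ψ hψΦ]
  have hLψfix : Lψ (GΦ x) = GΦ x := by
    obtain ⟨N, hN⟩ := hLψ (GΦ x)
    rw [← hN N le_rfl, hψfix]
  -- φ fixes GΦ x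
  have hφfix : φ (GΦ x) = GΦ x := by
    obtain ⟨N, hN⟩ := hLφ (GΦ x)
    have hiter : ∀ (n : ℕ) (d : D), φ^[n] d ≤ d := by
      intro n
      induction n with
      | zero => intro d; simp
      | succ n ih => intro d; rw [Function.iterate_succ_apply]
                     exact (ih (φ d)).trans (hφcontr d)
    have hle : Lφ (GΦ x) ≤ φ (GΦ x) := by
      rw [← hN (N + 1) (Nat.le_succ N), Function.iterate_succ_apply]
      exact hiter N (φ (GΦ x))
    have : GΦ x ≤ φ (GΦ x) := by
      calc GΦ x = Lψ (GΦ x) := hLψfix.symm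
        _ = Lφ (GΦ x) := (hweak _).symm
        _ ≤ φ (GΦ x) := hle
    exact le_antisymm (hφcontr _) this
  apply le_antisymm
  · exact g3 _ h1 fun f hf => h2 f (Set.mem_union_left _ hf)
  · refine h3 _ g1 fun f hf => ?_
    rcases hf with hf | hf
    · exact g2 f hf
    · rw [Set.mem_singleton_iff] at hf; rw [hf]; exact hφfix
end

section
/- Let D be a finite meet-semilattice and F = {f₀, f₁, …, f_k} a finite set of reduction functions on D. Let G be a nonempty finite set of reduction functions on D that is a decomposition of f₀, i.e., Gfp(G)(x) = f₀↑ω(x) for every x ∈ D. Then, setting H = G ∪ {f₁, …, f_k}, we have Gfp(H)(x) = Gfp(F)(x) for every x ∈ D. -/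
/-- on a finite meet-semilattice, let `F = {f₀} ∪ S` with
`S = {f₁, …, f_k}` a finite set of reduction functions, and let `G` be a
nonempty finite set of reduction functions that is a decomposition of `f₀`,
i.e., `Gfp G x = f₀↑ω x` for all `x` (where `L₀ = f₀↑ω` is the eventual value
of the iterates of `f₀`).  Then, with `H = G ∪ S`, `Gfp H x = Gfp F x` for
all `x`. -/
theorem gfp_of_decomposition {D : Type*} [SemilatticeInf D] [Finite D]
    (f₀ : D → D) (hf₀contr : ∀ x : D, f₀ x ≤ x) (hf₀mono : Monotone f₀)
    (S : Set (D → D)) (hSfin : S.Finite)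
    (hScontr : ∀ f ∈ S, ∀ x : D, f x ≤ x)
    (hSmono : ∀ f ∈ S, Monotone f)
    (G : Set (D → D)) (hGfin : G.Finite) (hGne : G.Nonempty)
    (hGcontr : ∀ g ∈ G, ∀ x : D, g x ≤ x)
    (hGmono : ∀ g ∈ G, Monotone g)
    (L₀ : D → D) (hL₀ : ∀ d : D, ∃ N : ℕ, ∀ n : ℕ, N ≤ n → f₀^[n] d = L₀ d)
    (gG : D → D) (hgG : IsGfp G gG)
    (hdecomp : ∀ x : D, gG x = L₀ x)
    (gH : D → D) (hgH : IsGfp (G ∪ S) gH)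
    (gF : D → D) (hgF : IsGfp ({f₀} ∪ S) gF) :
    ∀ x : D, gH x = gF x := by
  have hfixL : ∀ d, f₀ (L₀ d) = L₀ d := by
    intro d
    obtain ⟨N, hN⟩ := hL₀ d
    calc f₀ (L₀ d) = f₀ (f₀^[N] d) := by rw [hN N le_rfl]
      _ = f₀^[N + 1] d := (Function.iterate_succ_apply' f₀ N d).symm
      _ = L₀ d := hN (N + 1) (Nat.le_succ N)
  have hL₀fix : ∀ e, f₀ e = e → L₀ e = e := by
    intro e he
    obtain ⟨N, hN⟩ := hL₀ e
    rw [← hN N le_rfl, Function.iterate_fixed he N]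
  intro x
  apply le_antisymm
  · -- gH x is a fixed point of f₀ and of S
    have hGfix : ∀ g ∈ G, g (gH x) = gH x := fun g hg => (hgH x).2.1 g (Or.inl hg)
    have h1 : gG (gH x) = gH x :=
      le_antisymm (hgG (gH x)).1 ((hgG (gH x)).2.2 (gH x) le_rfl hGfix)
    have h2 : L₀ (gH x) = gH x := by rw [← hdecomp]; exact h1
    have h3 : f₀ (gH x) = gH x := by
      conv_lhs => rw [← h2]
      rw [hfixL, h2]
    refine (hgF x).2.2 (gH x) (hgH x).1 ?_
    rintro f (rfl | hf)
    · exact h3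
    · exact (hgH x).2.1 f (Or.inr hf)
  · have h3 : f₀ (gF x) = gF x := (hgF x).2.1 f₀ (Or.inl rfl)
    have h2 : gG (gF x) = gF x := by rw [hdecomp, hL₀fix _ h3]
    refine (hgH x).2.2 (gF x) (hgF x).1 ?_
    rintro f (hf | hf)
    · have := (hgG (gF x)).2.1 f hf
      rwa [h2] at this
    · exact (hgF x).2.1 f (Or.inr hf)
end
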